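/- arXiv:2501.15163 — 2 statements merged into one kernel-verified Lean document; each statement's English description precedes it below -/
import Mathlib

section
/- Let K ≥ 1 be an integer and p ≥ 1 a real number. Define the ℓ_p loss ℓ(u, q) = (∑_{i=1}^K |u_i − q_i|^p)^{1/p} for u, q ∈ ℝ^K. Then for every q in the probability simplex 𝒴 and all a, b ∈ ℝ^K, |ℓ(S(a), q) − ℓ(S(b), q)| ≤ √2 · K · ‖a − b‖₂. -/
open scoped BigOperators

/-- The softmax function `S(x)_i = exp(x_i) / ∑_j exp(x_j)` on `ℝ^K`. -/
noncomputable def softmax {K : ℕ} (x : Fin K → ℝ) : Fin K → ℝ :=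
  fun i => Real.exp (x i) / ∑ j, Real.exp (x j)

/-!
The ℓ_p loss is the ℓ_p distance to `q`, so by the reverse triangle inequality the difference
of losses is at most `‖S a - S b‖_p ≤ ‖S a - S b‖_1`. Each coordinate of the softmax is
`√2`-Lipschitz by the mean value theorem: along `t ↦ b + t (a - b)` the derivative of `S_i` is
`S_i ⟨e_i - S, a - b⟩`, and `‖e_i - w‖₂² ≤ 2` for every probability vector `w`.
-/

open Finset

namespace Real

variable {ι : Type*}

theorem sum_rpow_le_rpow_sum (s : Finset ι) {f : ι → ℝ} (hf : ∀ i ∈ s, 0 ≤ f i) {p : ℝ}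
    (hp : 1 ≤ p) : ∑ i ∈ s, f i ^ p ≤ (∑ i ∈ s, f i) ^ p := by
  classical
  induction s using Finset.induction_on with
  | empty => simp [zero_rpow (by linarith : p ≠ 0)]
  | insert i s hi ih =>
    have hfi : 0 ≤ f i := hf i (mem_insert_self i s)
    have hfs : ∀ j ∈ s, 0 ≤ f j := fun j hj => hf j (mem_insert_of_mem hj)
    rw [sum_insert hi, sum_insert hi]
    calc f i ^ p + ∑ j ∈ s, f j ^ p ≤ f i ^ p + (∑ j ∈ s, f j) ^ p := by
          gcongr; exact ih hfs
      _ ≤ (f i + ∑ j ∈ s, f j) ^ p := add_rpow_le_rpow_add hfi (sum_nonneg hfs) hp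

theorem Lp_le_sum_abs (s : Finset ι) (f : ι → ℝ) {p : ℝ} (hp : 1 ≤ p) :
    (∑ i ∈ s, |f i| ^ p) ^ (1 / p) ≤ ∑ i ∈ s, |f i| := by
  have hsum : 0 ≤ ∑ i ∈ s, |f i| := sum_nonneg fun i _ => abs_nonneg (f i)
  calc (∑ i ∈ s, |f i| ^ p) ^ (1 / p) ≤ ((∑ i ∈ s, |f i|) ^ p) ^ (1 / p) := by
        gcongr
        exact sum_rpow_le_rpow_sum s (fun i _ => abs_nonneg (f i)) hp
    _ = ∑ i ∈ s, |f i| := by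
        rw [← rpow_mul hsum, mul_one_div_cancel (by linarith), rpow_one]

theorem Lp_sub_le (s : Finset ι) (f g h : ι → ℝ) {p : ℝ} (hp : 1 ≤ p) :
    (∑ i ∈ s, |f i - h i| ^ p) ^ (1 / p) ≤
      (∑ i ∈ s, |f i - g i| ^ p) ^ (1 / p) + (∑ i ∈ s, |g i - h i| ^ p) ^ (1 / p) := by
  simpa only [sub_add_sub_cancel] using
    Lp_add_le s (fun i => f i - g i) (fun i => g i - h i) hp

theorem abs_Lp_sub_Lp_le (s : Finset ι) (f g h : ι → ℝ) {p : ℝ} (hp : 1 ≤ p) :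
    |(∑ i ∈ s, |f i - h i| ^ p) ^ (1 / p) - (∑ i ∈ s, |g i - h i| ^ p) ^ (1 / p)| ≤
      (∑ i ∈ s, |f i - g i| ^ p) ^ (1 / p) := by
  have hfg := Lp_sub_le s f g h hp
  have hgf := Lp_sub_le s g f h hp
  simp only [abs_sub_comm (g _) (f _)] at hgf
  exact abs_sub_le_iff.2 ⟨by linarith, by linarith⟩

end Real

section ProbabilityVector

variable {ι : Type*} [Fintype ι] [DecidableEq ι] {w : ι → ℝ}

theorem sum_sq_single_sub_le_two (hw0 : ∀ j, 0 ≤ w j) (hw1 : ∑ j, w j = 1) (i : ι) :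
    ∑ j, (Pi.single i 1 - w : ι → ℝ) j ^ 2 ≤ 2 := by
  have hw_le_one (j : ι) : w j ≤ 1 := hw1 ▸ single_le_sum (fun k _ => hw0 k) (mem_univ j)
  have hterm (j : ι) :
      (Pi.single i 1 - w : ι → ℝ) j ^ 2 ≤ (Pi.single i 1 + w : ι → ℝ) j := by
    have := hw0 j
    have := hw_le_one j
    rcases eq_or_ne j i with rfl | hji
    · simp only [Pi.sub_apply, Pi.add_apply, Pi.single_eq_same]; nlinarith
    · simp only [Pi.sub_apply, Pi.add_apply, Pi.single_eq_of_ne hji]; nlinarith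
  calc ∑ j, (Pi.single i 1 - w : ι → ℝ) j ^ 2
      ≤ ∑ j, (Pi.single i 1 + w : ι → ℝ) j := sum_le_sum fun j _ => hterm j
    _ = 2 := by simp only [Pi.add_apply, sum_add_distrib, sum_pi_single', hw1]; norm_num

theorem abs_mul_sub_sum_mul_le (hw0 : ∀ j, 0 ≤ w j) (hw1 : ∑ j, w j = 1) (c : ι → ℝ) (i : ι) :
    |w i * (c i - ∑ j, w j * c j)| ≤ Real.sqrt 2 * Real.sqrt (∑ j, c j ^ 2) := by
  have hwi : w i ≤ 1 := hw1 ▸ single_le_sum (fun k _ => hw0 k) (mem_univ i)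
  have hinner : c i - ∑ j, w j * c j = ∑ j, (Pi.single i 1 - w : ι → ℝ) j * c j := by
    simp only [Pi.sub_apply, sub_mul, sum_sub_distrib, Pi.single_apply, ite_mul, one_mul,
      zero_mul, sum_ite_eq', mem_univ, if_true]
  have hCS : |c i - ∑ j, w j * c j| ≤ Real.sqrt 2 * Real.sqrt (∑ j, c j ^ 2) := by
    rw [← Real.sqrt_mul zero_le_two, hinner]
    refine Real.abs_le_sqrt ((sum_mul_sq_le_sq_mul_sq _ _ _).trans ?_)
    gcongr
    exact sum_sq_single_sub_le_two hw0 hw1 i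
  calc |w i * (c i - ∑ j, w j * c j)| = w i * |c i - ∑ j, w j * c j| := by
        rw [abs_mul, abs_of_nonneg (hw0 i)]
    _ ≤ |c i - ∑ j, w j * c j| := mul_le_of_le_one_left (abs_nonneg _) hwi
    _ ≤ Real.sqrt 2 * Real.sqrt (∑ j, c j ^ 2) := hCS

end ProbabilityVector

namespace softmax

variable {K : ℕ}

theorem nonneg (x : Fin K → ℝ) (i : Fin K) : 0 ≤ softmax x i :=
  div_nonneg (Real.exp_pos _).le (sum_nonneg fun _ _ => (Real.exp_pos _).le)

theorem sum_eq_one [NeZero K] (x : Fin K → ℝ) : ∑ i, softmax x i = 1 := by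
  simp only [softmax, ← sum_div]
  exact div_self (sum_pos (fun j _ => Real.exp_pos _) univ_nonempty).ne'

theorem hasDerivAt_line (x c : Fin K → ℝ) (i : Fin K) (t : ℝ) :
    HasDerivAt (fun s => softmax (x + s • c) i)
      (softmax (x + t • c) i * (c i - ∑ j, softmax (x + t • c) j * c j)) t := by
  have hline (j : Fin K) : HasDerivAt (fun s : ℝ => (x + s • c) j) (c j) t := by
    simpa using ((hasDerivAt_id t).mul_const (c j)).const_add (x j)
  have hZ : ∑ j, Real.exp ((x + t • c) j) ≠ 0 :=
    (sum_pos (fun j _ => Real.exp_pos _) ⟨i, mem_univ i⟩).ne'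
  refine ((hline i).exp.div (HasDerivAt.fun_sum fun j _ => (hline j).exp) hZ).congr_deriv ?_
  simp only [softmax, ← sum_div, div_mul_eq_mul_div]
  field_simp

end softmax

theorem abs_softmax_sub_softmax_le {K : ℕ} (a b : Fin K → ℝ) (i : Fin K) :
    |softmax a i - softmax b i| ≤ Real.sqrt 2 * Real.sqrt (∑ j, (a j - b j) ^ 2) := by
  have : NeZero K := ⟨Fin.pos i |>.ne'⟩
  have hmvt := norm_image_sub_le_of_norm_deriv_le_segment_01'
    (fun t _ => (softmax.hasDerivAt_line b (a - b) i t).hasDerivWithinAt)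
    (fun t _ => abs_mul_sub_sum_mul_le (softmax.nonneg _) (softmax.sum_eq_one _) (a - b) i)
  simpa using hmvt

theorem lp_loss_softmax_lipschitz_general (K : ℕ) (p : ℝ) (hp : 1 ≤ p)
    (q : Fin K → ℝ) (a b : Fin K → ℝ) :
    |(∑ i, |softmax a i - q i| ^ p) ^ (1 / p) - (∑ i, |softmax b i - q i| ^ p) ^ (1 / p)|
      ≤ Real.sqrt 2 * K * Real.sqrt (∑ j, (a j - b j) ^ 2) := by
  calc _ ≤ (∑ i, |softmax a i - softmax b i| ^ p) ^ (1 / p) :=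
        Real.abs_Lp_sub_Lp_le _ _ _ _ hp
    _ ≤ ∑ i, |softmax a i - softmax b i| := Real.Lp_le_sum_abs _ _ hp
    _ ≤ ∑ _i : Fin K, Real.sqrt 2 * Real.sqrt (∑ j, (a j - b j) ^ 2) :=
        sum_le_sum fun i _ => abs_softmax_sub_softmax_le a b i
    _ = Real.sqrt 2 * K * Real.sqrt (∑ j, (a j - b j) ^ 2) := by
        rw [sum_const, card_univ, Fintype.card_fin, nsmul_eq_mul]; ring

/-- The ℓ_p loss `ℓ(u,q) = (∑_i |u_i − q_i|^p)^{1/p}`, `p ≥ 1`, composed with the softmax,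
is `√2·K`-Lipschitz with respect to the Euclidean norm, uniformly over labels `q` in the
probability simplex. -/
theorem lp_loss_softmax_lipschitz (K : ℕ) (hK : 1 ≤ K) (p : ℝ) (hp : 1 ≤ p)
    (q : Fin K → ℝ) (hq01 : ∀ i, q i ∈ Set.Icc (0 : ℝ) 1) (hqsum : ∑ i, q i = 1)
    (a b : Fin K → ℝ) :
    |(∑ i, |softmax a i - q i| ^ p) ^ (1 / p) - (∑ i, |softmax b i - q i| ^ p) ^ (1 / p)|
      ≤ Real.sqrt 2 * K * Real.sqrt (∑ j, (a j - b j) ^ 2) :=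
  lp_loss_softmax_lipschitz_general K p hp q a b
end

section
/- Let K ≥ 1 be an integer and A ≤ 0 a real number. Let q ∈ 𝒴 be such that for every i either q_i = 0 or q_i ≥ exp(A). Then the reverse cross-entropy loss ℓ(u, q) = −∑_{i=1}^K u_i · L_A(q_i) satisfies, for all a, b ∈ ℝ^K, |ℓ(S(a), q) − ℓ(S(b), q)| ≤ −√2 · K · A · ‖a − b‖₂. -/
open scoped BigOperators

/-- The modified logarithm encoding the convention `log 0 := A`:
`L_A(t) = log t` for `t ≠ 0` and `L_A(0) = A`. -/
noncomputable def logA (A : ℝ) (t : ℝ) : ℝ := if t = 0 then A else Real.log t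

/-!
Along the segment from `y` to `x`, the derivative of `S(·)_i` in the direction `d = x - y` is
`S_i (d_i - ∑_j S_j d_j)`. As `S` is a probability vector, this is at most
`max_j |d_i - d_j| ≤ √2 ‖d‖₂` in absolute value, so by the mean value theorem each coordinate of
the softmax is `√2`-Lipschitz. Under the hypotheses on `q` every `L_A(q_i)` lies in `[A, 0]`, and
summing the `K` coordinate bounds gives the constant `-√2 K A`.
-/

lemma abs_sub_le_sqrt_two_mul_sqrt_sum_sq {ι : Type*} [Fintype ι] (d : ι → ℝ) (i j : ι) :
    |d i - d j| ≤ Real.sqrt 2 * Real.sqrt (∑ k, d k ^ 2) := by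
  classical
  rw [← Real.sqrt_mul zero_le_two]
  apply Real.abs_le_sqrt
  rcases eq_or_ne i j with rfl | hij
  · simpa using Finset.sum_nonneg fun k _ => sq_nonneg (d k)
  · have hpair : d i ^ 2 + d j ^ 2 ≤ ∑ k, d k ^ 2 :=
      calc d i ^ 2 + d j ^ 2 = ∑ k ∈ {i, j}, d k ^ 2 :=
            (Finset.sum_pair (f := fun k => d k ^ 2) hij).symm
        _ ≤ ∑ k, d k ^ 2 := Finset.sum_le_sum_of_subset_of_nonneg (Finset.subset_univ _)
            fun k _ _ => sq_nonneg (d k)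
    nlinarith [sq_nonneg (d i + d j)]

lemma abs_sub_sum_mul_le {ι : Type*} [Fintype ι] {w c : ι → ℝ} {a C : ℝ}
    (hw : ∀ j, 0 ≤ w j) (hw1 : ∑ j, w j = 1) (hC : ∀ j, |a - c j| ≤ C) :
    |a - ∑ j, w j * c j| ≤ C := by
  have hmean : a - ∑ j, w j * c j = ∑ j, w j * (a - c j) := by
    simp only [mul_sub, Finset.sum_sub_distrib, ← Finset.sum_mul, hw1, one_mul]
  calc |a - ∑ j, w j * c j| ≤ ∑ j, |w j * (a - c j)| := hmean ▸ Finset.abs_sum_le_sum_abs _ _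
    _ ≤ ∑ j, w j * C := Finset.sum_le_sum fun j _ => by
        rw [abs_mul, abs_of_nonneg (hw j)]
        exact mul_le_mul_of_nonneg_left (hC j) (hw j)
    _ = C := by rw [← Finset.sum_mul, hw1, one_mul]

lemma abs_sum_mul_sub_sum_mul_le {ι : Type*} [Fintype ι] {u v g : ι → ℝ} {ε M : ℝ}
    (huv : ∀ i, |u i - v i| ≤ ε) (hg : ∀ i, |g i| ≤ M) :
    |∑ i, u i * g i - ∑ i, v i * g i| ≤ Fintype.card ι * (ε * M) := by
  rw [← Finset.sum_sub_distrib]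
  calc |∑ i, (u i * g i - v i * g i)| ≤ ∑ i, |u i * g i - v i * g i| :=
        Finset.abs_sum_le_sum_abs _ _
    _ = ∑ i, |u i - v i| * |g i| := by simp only [← sub_mul, abs_mul]
    _ ≤ ∑ _i : ι, ε * M := Finset.sum_le_sum fun i _ =>
        mul_le_mul (huv i) (hg i) (abs_nonneg _) ((abs_nonneg _).trans (huv i))
    _ = Fintype.card ι * (ε * M) := by
        rw [Finset.sum_const, Finset.card_univ, nsmul_eq_mul]

lemma abs_logA_le {A t : ℝ} (hA : A ≤ 0) (ht1 : t ≤ 1) (ht : t = 0 ∨ Real.exp A ≤ t) :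
    |logA A t| ≤ -A := by
  rcases ht with rfl | hAt
  · rw [logA, if_pos rfl, abs_of_nonpos hA]
  · have ht0 : 0 < t := (Real.exp_pos A).trans_le hAt
    have hlow : A ≤ Real.log t := (Real.le_log_iff_exp_le ht0).2 hAt
    have hhigh : Real.log t ≤ 0 := Real.log_nonpos ht0.le ht1
    rw [logA, if_neg ht0.ne', abs_le]
    constructor <;> linarith

section

variable {K : ℕ}

lemma softmax_nonneg (x : Fin K → ℝ) (i : Fin K) : 0 ≤ softmax x i :=
  div_nonneg (Real.exp_pos _).le (Finset.sum_nonneg fun _ _ => (Real.exp_pos _).le)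

lemma softmax_le_one (x : Fin K → ℝ) (i : Fin K) : softmax x i ≤ 1 :=
  div_le_one_of_le₀
    (Finset.single_le_sum (fun j _ => (Real.exp_pos (x j)).le) (Finset.mem_univ i))
    (Finset.sum_nonneg fun _ _ => (Real.exp_pos _).le)

lemma sum_softmax [NeZero K] (x : Fin K → ℝ) : ∑ i, softmax x i = 1 := by
  have hZ : 0 < ∑ j, Real.exp (x j) :=
    Finset.sum_pos (fun j _ => Real.exp_pos _) Finset.univ_nonempty
  simp only [softmax, ← Finset.sum_div, div_self hZ.ne']

lemma hasDerivAt_softmax_line (x d : Fin K → ℝ) (i : Fin K) (t : ℝ) :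
    HasDerivAt (fun s => softmax (fun j => x j + s * d j) i)
      (softmax (fun j => x j + t * d j) i *
        (d i - ∑ j, softmax (fun j => x j + t * d j) j * d j)) t := by
  have hexp : ∀ j, HasDerivAt (fun s => Real.exp (x j + s * d j))
      (Real.exp (x j + t * d j) * d j) t := fun j =>
    (((hasDerivAt_id t).mul_const (d j)).const_add (x j)).exp.congr_deriv (by simp)
  have hZ : 0 < ∑ j, Real.exp (x j + t * d j) :=
    Finset.sum_pos (fun j _ => Real.exp_pos _) ⟨i, Finset.mem_univ i⟩
  refine ((hexp i).div (HasDerivAt.fun_sum fun j _ => hexp j) hZ.ne').congr_deriv ?_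
  simp only [softmax, div_mul_eq_mul_div, ← Finset.sum_div]
  field_simp

lemma abs_softmax_sub_le (x y : Fin K → ℝ) (i : Fin K) :
    |softmax x i - softmax y i| ≤ Real.sqrt 2 * Real.sqrt (∑ j, (x j - y j) ^ 2) := by
  have : NeZero K := ⟨fun hK => (hK ▸ i).elim0⟩
  set d : Fin K → ℝ := fun j => x j - y j
  have hderiv := hasDerivAt_softmax_line y d i
  have hbound (t : ℝ) : |softmax (fun j => y j + t * d j) i *
      (d i - ∑ j, softmax (fun j => y j + t * d j) j * d j)| ≤
        Real.sqrt 2 * Real.sqrt (∑ j, d j ^ 2) := by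
    rw [abs_mul, abs_of_nonneg (softmax_nonneg _ i)]
    refine (mul_le_of_le_one_left (abs_nonneg _) (softmax_le_one _ i)).trans ?_
    exact abs_sub_sum_mul_le (softmax_nonneg _) (sum_softmax _)
      (abs_sub_le_sqrt_two_mul_sqrt_sum_sq d i)
  simpa [d] using norm_image_sub_le_of_norm_deriv_le_segment_01'
    (fun t _ => (hderiv t).hasDerivWithinAt) (fun t _ => hbound t)

end

theorem rce_loss_softmax_lipschitz_general (K : ℕ) (A : ℝ) (hA : A ≤ 0)
    (q : Fin K → ℝ) (hq01 : ∀ i, q i ∈ Set.Icc (0 : ℝ) 1)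
    (hqA : ∀ i, q i = 0 ∨ Real.exp A ≤ q i)
    (a b : Fin K → ℝ) :
    |(-∑ i, softmax a i * logA A (q i)) - (-∑ i, softmax b i * logA A (q i))|
      ≤ -(Real.sqrt 2 * K * A * Real.sqrt (∑ j, (a j - b j) ^ 2)) := by
  calc |(-∑ i, softmax a i * logA A (q i)) - (-∑ i, softmax b i * logA A (q i))|
      = |∑ i, softmax a i * logA A (q i) - ∑ i, softmax b i * logA A (q i)| := by
        rw [neg_sub_neg, abs_sub_comm]
    _ ≤ Fintype.card (Fin K) *
          ((Real.sqrt 2 * Real.sqrt (∑ j, (a j - b j) ^ 2)) * -A) :=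
        abs_sum_mul_sub_sum_mul_le (abs_softmax_sub_le a b)
          fun i => abs_logA_le hA (hq01 i).2 (hqA i)
    _ = -(Real.sqrt 2 * K * A * Real.sqrt (∑ j, (a j - b j) ^ 2)) := by
        rw [Fintype.card_fin]; ring

/-- The reverse cross-entropy loss `ℓ(u,q) = −∑_i u_i L_A(q_i)` composed with the softmax
is `(−√2·K·A)`-Lipschitz with respect to the Euclidean norm, for labels `q` in the
probability simplex whose coordinates are either `0` or at least `exp A`. -/
theorem rce_loss_softmax_lipschitz (K : ℕ) (hK : 1 ≤ K) (A : ℝ) (hA : A ≤ 0)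
    (q : Fin K → ℝ) (hq01 : ∀ i, q i ∈ Set.Icc (0 : ℝ) 1) (hqsum : ∑ i, q i = 1)
    (hqA : ∀ i, q i = 0 ∨ Real.exp A ≤ q i)
    (a b : Fin K → ℝ) :
    |(-∑ i, softmax a i * logA A (q i)) - (-∑ i, softmax b i * logA A (q i))|
      ≤ -(Real.sqrt 2 * K * A * Real.sqrt (∑ j, (a j - b j) ^ 2)) :=
  rce_loss_softmax_lipschitz_general K A hA q hq01 hqA a b
end
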